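/- If (t₀,…,t₀) ∈ F(w, Γ(g)) for some w ∈ D(t₀), then d(w,Γ(f)) = 0, d(w,Γ(g)) ≠ 0, and σ(w)/(d(w,Γ(g)) − d(w,Γ(f))) = 1/t₀. Hence w ∈ T₊ and the smallest candidate positive real pole α equals 1/t₀. -/

import Mathlib

open Finset Pointwise

variable {n : ℕ}

/-- The pairing `⟨k,x⟩ = ∑ i, k i * x i`. -/
noncomputable def dotp (k x : Fin n → ℝ) : ℝ := ∑ i, k i * x i

/-- Convex hull of the union of translated positive orthants `m + ℝ₊ⁿ`. -/
def orthHull (S : Set (Fin n → ℝ)) : Set (Fin n → ℝ) :=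
  convexHull ℝ (⋃ m ∈ S, {x : Fin n → ℝ | ∀ i, m i ≤ x i})

/-- `Γ` is a Newton polyhedron: the convex hull of `⋃_{m ∈ supp} (m + ℝ₊ⁿ)`
for a nonempty finite set of lattice points (the support of a polynomial
vanishing at the origin). -/
def IsNewtonPolyhedron (Γ : Set (Fin n → ℝ)) : Prop :=
  ∃ S : Finset (Fin n → ℕ), S.Nonempty ∧
    Γ = orthHull ((fun m : Fin n → ℕ => fun i => (m i : ℝ)) '' (S : Set (Fin n → ℕ)))

/-- `d(k,Γ) = min_{x ∈ Γ} ⟨k,x⟩`. -/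
noncomputable def dval (k : Fin n → ℝ) (Γ : Set (Fin n → ℝ)) : ℝ :=
  sInf ((fun x => dotp k x) '' Γ)

/-- First meet locus `F(k,Γ) = {x ∈ Γ : ⟨k,x⟩ = d(k,Γ)}`. -/
def fmeet (k : Fin n → ℝ) (Γ : Set (Fin n → ℝ)) : Set (Fin n → ℝ) :=
  {x ∈ Γ | dotp k x = dval k Γ}

/-- `σ(k) = ∑ i, k i`. -/
noncomputable def sigmaS (k : Fin n → ℝ) : ℝ := ∑ i, k i

/-- The smallest face of `Γ` containing a point `p`: the intersection of all
first meet loci (faces) containing `p`. -/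
def minFace (Γ : Set (Fin n → ℝ)) (p : Fin n → ℝ) : Set (Fin n → ℝ) :=
  ⋂₀ {F | p ∈ F ∧ ∃ k : Fin n → ℝ, (∀ i, 0 ≤ k i) ∧ F = fmeet k Γ}

/-- Cast a lattice vector to `ℝⁿ`. -/
def natVec (w : Fin n → ℕ) : Fin n → ℝ := fun i => (w i : ℝ)

/-- `w` is the primitive normal vector of a facet (face of dimension `n-1`) of `Γ`. -/
def IsPrimFacetNormal (Γ : Set (Fin n → ℝ)) (w : Fin n → ℕ) : Prop :=
  w ≠ 0 ∧ Finset.univ.gcd w = 1 ∧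
    Module.finrank ℝ (affineSpan ℝ (fmeet (natVec w) Γ)).direction = n - 1

/-- `D(t₀)`: primitive normal vectors of the facets of `Γ` containing the
smallest face through the diagonal point `p = (t₀,…,t₀)`. -/
def Dset (Γ : Set (Fin n → ℝ)) (p : Fin n → ℝ) : Set (Fin n → ℕ) :=
  {w | IsPrimFacetNormal Γ w ∧ minFace Γ p ⊆ fmeet (natVec w) Γ}

/-!
Every point `p` of the closure of `Γf + Γg` satisfies `d(k,Γf) + d(k,Γg) ≤ ⟨k,p⟩` for `k ≥ 0`,
and `d(k,Γ) ≥ 0` since Newton polyhedra lie in the positive orthant. At the diagonal point and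
`k = w`, where `⟨w,p⟩ = σ(w) t₀ = d(w,Γg)`, this forces `d(w,Γf) = 0`; for arbitrary `v` it gives
`d(v,Γg) − d(v,Γf) ≤ σ(v) t₀`, so every candidate ratio is at least `1/t₀`, attained at `w`.
-/

lemma dotp_add (k x y : Fin n → ℝ) : dotp k (x + y) = dotp k x + dotp k y := by
  simp only [dotp, Pi.add_apply, mul_add, Finset.sum_add_distrib]

lemma dotp_const (k : Fin n → ℝ) (t : ℝ) : dotp k (fun _ => t) = sigmaS k * t := by
  simp only [dotp, sigmaS, Finset.sum_mul]

lemma dotp_nonneg {k x : Fin n → ℝ} (hk : ∀ i, 0 ≤ k i) (hx : ∀ i, 0 ≤ x i) :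
    0 ≤ dotp k x :=
  Finset.sum_nonneg fun i _ => mul_nonneg (hk i) (hx i)

lemma continuous_dotp (k : Fin n → ℝ) : Continuous (dotp k) :=
  continuous_finsetSum _ fun i _ => continuous_const.mul (continuous_apply i)

lemma natVec_nonneg (v : Fin n → ℕ) (i : Fin n) : 0 ≤ natVec v i :=
  Nat.cast_nonneg _

lemma sigmaS_natVec_pos {v : Fin n → ℕ} (hv : v ≠ 0) : 0 < sigmaS (natVec v) := by
  obtain ⟨i, hi⟩ := Function.ne_iff.mp hv
  exact Finset.sum_pos' (fun j _ => natVec_nonneg v j)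
    ⟨i, Finset.mem_univ i, Nat.cast_pos.mpr (Nat.pos_of_ne_zero hi)⟩

lemma dval_le_dotp {k x : Fin n → ℝ} {Γ : Set (Fin n → ℝ)} (hΓ : BddBelow (dotp k '' Γ))
    (hx : x ∈ Γ) : dval k Γ ≤ dotp k x :=
  csInf_le hΓ ⟨x, hx, rfl⟩

lemma add_dval_le_dotp_of_mem_closure {k x : Fin n → ℝ} {A B : Set (Fin n → ℝ)}
    (hA : BddBelow (dotp k '' A)) (hB : BddBelow (dotp k '' B)) (hx : x ∈ closure (A + B)) :
    dval k A + dval k B ≤ dotp k x := by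
  refine closure_minimal ?_ (isClosed_le continuous_const (continuous_dotp k)) hx
  rintro _ ⟨a, ha, b, hb, rfl⟩
  simp only [Set.mem_ofPred_eq, dotp_add]
  exact add_le_add (dval_le_dotp hA ha) (dval_le_dotp hB hb)

namespace IsNewtonPolyhedron

variable {Γ : Set (Fin n → ℝ)} (hΓ : IsNewtonPolyhedron Γ)
include hΓ

lemma nonneg {x : Fin n → ℝ} (hx : x ∈ Γ) (i : Fin n) : 0 ≤ x i := by
  obtain ⟨S, -, rfl⟩ := hΓ
  have hconv : Convex ℝ {x : Fin n → ℝ | ∀ i, 0 ≤ x i} := fun a ha b hb s t hs ht _ i =>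
    add_nonneg (mul_nonneg hs (ha i)) (mul_nonneg ht (hb i))
  refine convexHull_min ?_ hconv hx i
  intro y hy
  obtain ⟨_, ⟨m, -, rfl⟩, hym⟩ := Set.mem_iUnion₂.mp hy
  exact fun j => (Nat.cast_nonneg _).trans (hym j)

lemma bddBelow_dotp {k : Fin n → ℝ} (hk : ∀ i, 0 ≤ k i) : BddBelow (dotp k '' Γ) :=
  ⟨0, by rintro _ ⟨x, hx, rfl⟩; exact dotp_nonneg hk (hΓ.nonneg hx)⟩

lemma dval_nonneg {k : Fin n → ℝ} (hk : ∀ i, 0 ≤ k i) : 0 ≤ dval k Γ :=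
  Real.sInf_nonneg (by rintro _ ⟨x, hx, rfl⟩; exact dotp_nonneg hk (hΓ.nonneg hx))

end IsNewtonPolyhedron

section

variable {Γf Γg : Set (Fin n → ℝ)} (hΓf : IsNewtonPolyhedron Γf) (hΓg : IsNewtonPolyhedron Γg)
  {k p : Fin n → ℝ} (hk : ∀ i, 0 ≤ k i) (hp : p ∈ closure (Γf + Γg))
include hΓf hΓg hk hp

lemma dval_sub_dval_le_dotp : dval k Γg - dval k Γf ≤ dotp k p := by
  have := add_dval_le_dotp_of_mem_closure (hΓf.bddBelow_dotp hk) (hΓg.bddBelow_dotp hk) hp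
  linarith [hΓf.dval_nonneg hk]

lemma dval_eq_zero_of_mem_fmeet (hF : p ∈ fmeet k Γg) : dval k Γf = 0 := by
  have := add_dval_le_dotp_of_mem_closure (hΓf.bddBelow_dotp hk) (hΓg.bddBelow_dotp hk) hp
  rw [hF.2] at this
  linarith [hΓf.dval_nonneg hk]

end

theorem alpha_eq_inv_t0_general
    (Γf Γg : Set (Fin n → ℝ))
    (hΓf : IsNewtonPolyhedron Γf) (hΓg : IsNewtonPolyhedron Γg)
    (t₀ : ℝ) (ht₀ : 0 < t₀)
    (hdiag : (fun _ : Fin n => t₀) ∈ frontier (Γf + Γg))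
    (w : Fin n → ℕ) (hw : w ∈ Dset (Γf + Γg) (fun _ => t₀))
    (hF : (fun _ : Fin n => t₀) ∈ fmeet (natVec w) Γg) :
    dval (natVec w) Γf = 0 ∧
    dval (natVec w) Γg ≠ 0 ∧
    sigmaS (natVec w) / (dval (natVec w) Γg - dval (natVec w) Γf) = 1 / t₀ ∧
    0 < dval (natVec w) Γg - dval (natVec w) Γf ∧
    sInf {r : ℝ | ∃ v : Fin n → ℕ, v ≠ 0 ∧
        0 < dval (natVec v) Γg - dval (natVec v) Γf ∧
        r = sigmaS (natVec v) / (dval (natVec v) Γg - dval (natVec v) Γf)}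
      = 1 / t₀ := by
  have hp := frontier_subset_closure hdiag
  have hw0 : w ≠ 0 := hw.1.1
  have hdf := dval_eq_zero_of_mem_fmeet hΓf hΓg (natVec_nonneg w) hp hF
  have hdg : dval (natVec w) Γg = sigmaS (natVec w) * t₀ := by rw [← hF.2, dotp_const]
  have hdg_pos : 0 < dval (natVec w) Γg := hdg ▸ mul_pos (sigmaS_natVec_pos hw0) ht₀
  have hpos : 0 < dval (natVec w) Γg - dval (natVec w) Γf := by rwa [hdf, sub_zero]
  have hratio : sigmaS (natVec w) / (dval (natVec w) Γg - dval (natVec w) Γf) = 1 / t₀ := by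
    rw [hdf, hdg, sub_zero, div_mul_cancel_left₀ (sigmaS_natVec_pos hw0).ne', one_div]
  refine ⟨hdf, hdg_pos.ne', hratio, hpos, IsLeast.csInf_eq ⟨⟨w, hw0, hpos, hratio.symm⟩, ?_⟩⟩
  rintro _ ⟨v, -, hD, rfl⟩
  have hle := dval_sub_dval_le_dotp hΓf hΓg (natVec_nonneg v) hp
  rw [dotp_const] at hle
  rw [div_le_div_iff₀ ht₀ hD]
  linarith

/-- if the diagonal point `(t₀,…,t₀)` lies in `F(w,Γ(g))` for some
`w ∈ D(t₀)`, then `d(w,Γ(f)) = 0`, `d(w,Γ(g)) ≠ 0`,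
`σ(w)/(d(w,Γ(g)) − d(w,Γ(f))) = 1/t₀`, `w ∈ T₊`, and the smallest candidate
positive real pole `α` equals `1/t₀`. -/
theorem alpha_eq_inv_t0
    (hn : 2 ≤ n)
    (Γf Γg : Set (Fin n → ℝ))
    (hΓf : IsNewtonPolyhedron Γf) (hΓg : IsNewtonPolyhedron Γg)
    (t₀ : ℝ) (ht₀ : 0 < t₀)
    (hdiag : (fun _ : Fin n => t₀) ∈ frontier (Γf + Γg))
    (w : Fin n → ℕ) (hw : w ∈ Dset (Γf + Γg) (fun _ => t₀))
    (hF : (fun _ : Fin n => t₀) ∈ fmeet (natVec w) Γg) :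
    dval (natVec w) Γf = 0 ∧
    dval (natVec w) Γg ≠ 0 ∧
    sigmaS (natVec w) / (dval (natVec w) Γg - dval (natVec w) Γf) = 1 / t₀ ∧
    0 < dval (natVec w) Γg - dval (natVec w) Γf ∧
    sInf {r : ℝ | ∃ v : Fin n → ℕ, v ≠ 0 ∧
        0 < dval (natVec v) Γg - dval (natVec v) Γf ∧
        r = sigmaS (natVec v) / (dval (natVec v) Γg - dval (natVec v) Γf)}
      = 1 / t₀ :=
  alpha_eq_inv_t0_general Γf Γg hΓf hΓg t₀ ht₀ hdiag w hw hF
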